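/- If an arrangement (X*, {s_f}_{f∈F}) is r-stable, then the assignment X* is r-efficient; that is, for every r-feasible assignment X of workers to firms, the total match value satisfies U(X) ≤ U(X*). -/
import Mathlib


open Finset

namespace TwoSidedMatching

variable {W F : Type*} [Fintype W] [DecidableEq W] [Fintype F] [DecidableEq F]

/-- The set of workers assigned to firm `f` under assignment `X`. -/
def assigned (X : W → Option F) (f : F) : Finset W :=
  Finset.univ.filter fun w => X w = some f

/-- Payoff of worker `w`: `a w f + s w f` if matched to `f`, and `0` if unmatched. -/
def workerPayoff (a s : W → F → ℝ) (X : W → Option F) (w : W) : ℝ :=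
  match X w with
  | some f => a w f + s w f
  | none => 0

/-- Payoff of firm `f`: value of its assigned set minus total salaries paid. -/
def firmPayoff (b : Finset W → F → ℝ) (s : W → F → ℝ) (X : W → Option F) (f : F) : ℝ :=
  b (assigned X f) f - ∑ w ∈ assigned X f, s w f

/-- An assignment is feasible if each firm's assigned set is feasible or empty. -/
def Feasible (𝒯 : F → Set (Finset W)) (X : W → Option F) : Prop :=
  ∀ f : F, assigned X f ∈ 𝒯 f ∨ assigned X f = ∅

/-- r-feasibility: each firm's assigned set is feasible. -/
def RFeasible (𝒯 : F → Set (Finset W)) (X : W → Option F) : Prop :=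
  ∀ f : F, assigned X f ∈ 𝒯 f

/-- A blocking coalition: a firm `f`, a feasible set `D ∈ 𝒯 f`, and salaries `r`
making all members of `D ∪ {f}` weakly better off and at least one strictly better off. -/
def Blocks (a : W → F → ℝ) (b : Finset W → F → ℝ) (𝒯 : F → Set (Finset W))
    (s : W → F → ℝ) (X : W → Option F) : Prop :=
  ∃ f : F, ∃ D ∈ 𝒯 f, ∃ r : W → ℝ,
    (∀ w ∈ D, a w f + r w ≥ workerPayoff a s X w) ∧
    (b D f - ∑ w ∈ D, r w ≥ firmPayoff b s X f) ∧
    ((∃ w ∈ D, a w f + r w > workerPayoff a s X w) ∨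
      b D f - ∑ w ∈ D, r w > firmPayoff b s X f)

/-- Stability: feasible, individually rational for workers and firms, and no blocking coalition. -/
def Stable (a : W → F → ℝ) (b : Finset W → F → ℝ) (𝒯 : F → Set (Finset W))
    (s : W → F → ℝ) (X : W → Option F) : Prop :=
  Feasible 𝒯 X ∧ (∀ w, 0 ≤ workerPayoff a s X w) ∧
    (∀ f, 0 ≤ firmPayoff b s X f) ∧ ¬ Blocks a b 𝒯 s X

/-- r-stability: r-feasible, individually rational for workers, and no blocking coalition. -/
def RStable (a : W → F → ℝ) (b : Finset W → F → ℝ) (𝒯 : F → Set (Finset W))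
    (s : W → F → ℝ) (X : W → Option F) : Prop :=
  RFeasible 𝒯 X ∧ (∀ w, 0 ≤ workerPayoff a s X w) ∧ ¬ Blocks a b 𝒯 s X

/-- Total match value of an assignment. -/
def totalValue (a : W → F → ℝ) (b : Finset W → F → ℝ) (X : W → Option F) : ℝ :=
  (∑ w : W, match X w with
    | some f => a w f
    | none => 0) +
  ∑ f : F, b (assigned X f) f

/-- Two sets are intersecting if their intersection and both differences are nonempty. -/
def IntersectingSets (A B : Finset W) : Prop :=
  (A ∩ B).Nonempty ∧ (A \ B).Nonempty ∧ (B \ A).Nonempty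

/-- An intersecting family: does not contain `∅` and is closed under
intersections and unions of intersecting members. -/
def IntersectingFamily (ℋ : Set (Finset W)) : Prop :=
  ∅ ∉ ℋ ∧ ∀ A ∈ ℋ, ∀ B ∈ ℋ, IntersectingSets A B → A ∩ B ∈ ℋ ∧ A ∪ B ∈ ℋ

/-- Submodularity on intersecting pairs of a family. -/
def SubmodularOnIntersecting (ℋ : Set (Finset W)) (g : Finset W → ℤ) : Prop :=
  ∀ A ∈ ℋ, ∀ B ∈ ℋ, IntersectingSets A B → g (A ∪ B) + g (A ∩ B) ≤ g A + g B

/-- Supermodularity on intersecting pairs of a family. -/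
def SupermodularOnIntersecting (ℋ : Set (Finset W)) (g : Finset W → ℤ) : Prop :=
  ∀ A ∈ ℋ, ∀ B ∈ ℋ, IntersectingSets A B → g A + g B ≤ g (A ∪ B) + g (A ∩ B)

/-- A hierarchy: `∅` is not a member and any two members are nested or disjoint. -/
def Hierarchy (ℋ : Set (Finset W)) : Prop :=
  ∅ ∉ ℋ ∧ ∀ A ∈ ℋ, ∀ B ∈ ℋ, A ⊆ B ∨ B ⊆ A ∨ A ∩ B = ∅

/-- Feasible sets under upper-bound quotas: `|D ∩ D'| ≤ lam D'` for every `D' ∈ ℋ`. -/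
def upperSets (ℋ : Set (Finset W)) (lam : Finset W → ℤ) : Set (Finset W) :=
  {D | ∀ D' ∈ ℋ, ((D ∩ D').card : ℤ) ≤ lam D'}

/-- Feasible sets under lower and upper quotas: `lo D' ≤ |D ∩ D'| ≤ hi D'` for `D' ∈ ℋ`. -/
def quotaSets (ℋ : Set (Finset W)) (lo hi : Finset W → ℤ) : Set (Finset W) :=
  {D | ∀ D' ∈ ℋ, lo D' ≤ ((D ∩ D').card : ℤ) ∧ ((D ∩ D').card : ℤ) ≤ hi D'}

/-- Feasibility for the matching LP with upper-bound constraints. -/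
def LPFeasible (ℋ : F → Set (Finset W)) (lam : F → Finset W → ℤ) (x : W → F → ℝ) : Prop :=
  (∀ w f, 0 ≤ x w f) ∧ (∀ w, ∑ f : F, x w f ≤ 1) ∧
    ∀ f : F, ∀ D ∈ ℋ f, ∑ w ∈ D, x w f ≤ (lam f D : ℝ)

/-- Feasibility for the matching LP with lower and upper bound constraints. -/
def LPLBFeasible (ℋ : F → Set (Finset W)) (lo hi : F → Finset W → ℤ) (x : W → F → ℝ) : Prop :=
  (∀ w f, 0 ≤ x w f) ∧ (∀ w, ∑ f : F, x w f ≤ 1) ∧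
    ∀ f : F, ∀ D ∈ ℋ f, (lo f D : ℝ) ≤ ∑ w ∈ D, x w f ∧ ∑ w ∈ D, x w f ≤ (hi f D : ℝ)

/-- The LP objective: total match value of a fractional assignment. -/
def LPobj (α : W → F → ℝ) (x : W → F → ℝ) : ℝ :=
  ∑ w : W, ∑ f : F, α w f * x w f


lemma sum_assigned' {W F : Type*} [Fintype W] [DecidableEq W] [Fintype F] [DecidableEq F]
    (X : W → Option F) (g : W → F → ℝ) :
    ∑ f : F, ∑ w ∈ assigned X f, g w f
      = ∑ w : W, (match X w with | some f => g w f | none => 0) := by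
  simp only [assigned, Finset.sum_filter]
  rw [Finset.sum_comm]
  refine Finset.sum_congr rfl fun w _ => ?_
  cases h : X w with
  | none => simp [h]
  | some f0 => simp [h, Finset.sum_ite_eq]

/-- **r-Efficiency of r-stable arrangements.** If an arrangement `(X*, s)` is r-stable,
then `X*` is r-efficient: every r-feasible assignment `X` satisfies `U(X) ≤ U(X*)`. -/
theorem refficiency_of_rstable_arrangements
    {W F : Type*} [Fintype W] [DecidableEq W] [Fintype F] [DecidableEq F]
    (a : W → F → ℝ) (b : Finset W → F → ℝ) (𝒯 : F → Set (Finset W))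
    (hb : ∀ f : F, b ∅ f = 0)
    (s : W → F → ℝ) (Xstar : W → Option F)
    (hstable : RStable a b 𝒯 s Xstar) :
    ∀ X : W → Option F, RFeasible 𝒯 X → totalValue a b X ≤ totalValue a b Xstar := by
  intro X hX
  set u : W → ℝ := workerPayoff a s Xstar with hu
  set v : F → ℝ := firmPayoff b s Xstar with hv
  have hblock : ∀ f : F, ∀ D ∈ 𝒯 f,
      b D f + ∑ w ∈ D, a w f ≤ v f + ∑ w ∈ D, u w := by
    intro f D hD
    by_contra h
    push_neg at h
    apply hstable.2.2
    refine ⟨f, D, hD, fun w => u w - a w f, fun w _ => by simp [hu], ?_, Or.inr ?_⟩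
    · rw [Finset.sum_sub_distrib]
      linarith
    · rw [Finset.sum_sub_distrib]
      linarith
  have h1 : totalValue a b X
      = ∑ f : F, (b (assigned X f) f + ∑ w ∈ assigned X f, a w f) := by
    unfold totalValue
    rw [Finset.sum_add_distrib, ← sum_assigned' X (fun w f => a w f)]
    ring
  have h2 : totalValue a b X ≤ ∑ f : F, v f + ∑ f : F, ∑ w ∈ assigned X f, u w := by
    rw [h1, ← Finset.sum_add_distrib]
    exact Finset.sum_le_sum fun f _ => hblock f (assigned X f) (hX f)
  have h3 : ∑ f : F, ∑ w ∈ assigned X f, u w ≤ ∑ w : W, u w := by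
    rw [sum_assigned' X (fun w _ => u w)]
    refine Finset.sum_le_sum fun w _ => ?_
    cases h : X w with
    | none => exact hstable.2.1 w
    | some f0 => exact le_refl _
  have h4 : ∑ f : F, v f + ∑ w : W, u w = totalValue a b Xstar := by
    have hUu : ∑ w : W, u w
        = ∑ f : F, ∑ w ∈ assigned Xstar f, (a w f + s w f) := by
      rw [sum_assigned' Xstar (fun w f => a w f + s w f)]
      rfl
    unfold totalValue
    rw [← sum_assigned' Xstar (fun w f => a w f), hUu]
    simp only [hv, firmPayoff]
    rw [← Finset.sum_add_distrib, ← Finset.sum_add_distrib]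
    refine Finset.sum_congr rfl fun f _ => ?_
    rw [Finset.sum_add_distrib]
    ring
  linarith

end TwoSidedMatching
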